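/- arXiv:1803.02602 — 2 statements merged into one kernel-verified Lean document; each statement's English description precedes it below -/
import Mathlib

section
/- Let u solve A u = b, u^du solve A^H u^du = −l, with approximations u_r and u_r^du. Define the sketched primal-dual output s_r^{spd} = ⟨l, u_r⟩ − ⟨Θ u_r^du, Θ R_U^{-1} r(u_r)⟩, where r(u_r) = b − A u_r. If Θ is a U → ℓ2 ε-subspace embedding for span{u_r^du, R_U^{-1} r(u_r)}, and η > 0 satisfies η ≤ min_{x≠0} ‖A x‖_{U'}/‖x‖_U, then |⟨l,u⟩ − s_r^{spd}| ≤ (‖r(u_r)‖_{U'}/η) · ((1+ε)‖r^du(u_r^du)‖_{U'} + ε‖l‖_{U'}), where r^du(u_r^du) = −l − A^H u_r^du. -/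
open Matrix BigOperators

noncomputable section

/-- Inner product induced by `R`: `⟨x,y⟩_U = ⟨R x, y⟩`. -/
def ipR {n : ℕ} (R : Matrix (Fin n) (Fin n) ℝ) (x y : Fin n → ℝ) : ℝ :=
  R.mulVec x ⬝ᵥ y

/-- Norm induced by `R`. -/
def normR {n : ℕ} (R : Matrix (Fin n) (Fin n) ℝ) (x : Fin n → ℝ) : ℝ :=
  Real.sqrt (ipR R x x)

/-- Euclidean norm. -/
def norm2 {m : ℕ} (v : Fin m → ℝ) : ℝ :=
  Real.sqrt (v ⬝ᵥ v)

/-- Dual norm `‖y‖_{U'}` induced by `⟨·, R⁻¹ ·⟩`. -/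
def normDual {n : ℕ} (R : Matrix (Fin n) (Fin n) ℝ) (y : Fin n → ℝ) : ℝ :=
  Real.sqrt (y ⬝ᵥ R⁻¹.mulVec y)

/-- Dual seminorm `‖y‖_{Z'} = sup_{w ∈ Z, w ≠ 0} |⟨y,w⟩|/‖w‖_U`. -/
def dualSemi {n : ℕ} (R : Matrix (Fin n) (Fin n) ℝ) (Z : Submodule ℝ (Fin n → ℝ))
    (y : Fin n → ℝ) : ℝ :=
  ⨆ w : Z, |y ⬝ᵥ (w : Fin n → ℝ)| / normR R (w : Fin n → ℝ)

/-- Sketched dual seminorm `‖y‖_{Z'}^Θ = sup_{w ∈ Z, w ≠ 0} |⟨Θ R⁻¹ y, Θ w⟩|/‖Θ w‖`. -/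
def skDualSemi {n k : ℕ} (R : Matrix (Fin n) (Fin n) ℝ) (Θ : Matrix (Fin k) (Fin n) ℝ)
    (Z : Submodule ℝ (Fin n → ℝ)) (y : Fin n → ℝ) : ℝ :=
  ⨆ w : Z, |(Θ.mulVec (R⁻¹.mulVec y)) ⬝ᵥ (Θ.mulVec (w : Fin n → ℝ))| /
      norm2 (Θ.mulVec (w : Fin n → ℝ))

/-- `i`-th column of a matrix as a vector. -/
def colV {n m : ℕ} (M : Matrix (Fin n) (Fin m) ℝ) (i : Fin m) : Fin n → ℝ :=
  fun j => M j i

/-- Squared Frobenius norm. -/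
def frob2 {a b : ℕ} (M : Matrix (Fin a) (Fin b) ℝ) : ℝ :=
  ∑ i, ∑ j, (M i j) ^ 2

/-!
The error splits as `l ⬝ᵥ (u - u_r) + ⟨Θ u_r^du, Θ R⁻¹ r⟩` with `A (u - u_r) = r`, and pairing the
error `u - u_r` with the dual residual `r^du = -l - Aᵀ u_r^du` rewrites `l ⬝ᵥ (u - u_r)` as
`-(r^du ⬝ᵥ (u - u_r)) - ⟨u_r^du, R⁻¹ r⟩_U`. The first term is at most `‖r^du‖_{U'} ‖r‖_{U'} / η`;
the second differs from the sketched product by at most `ε ‖u_r^du‖_U ‖r‖_{U'}` by the embedding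
property, and `η ‖u_r^du‖_U ≤ ‖Aᵀ u_r^du‖_{U'} ≤ ‖r^du‖_{U'} + ‖l‖_{U'}` because `Aᵀ` satisfies the
same inf-sup bound as `A`.
-/

section

variable {n : ℕ} {R : Matrix (Fin n) (Fin n) ℝ}

theorem dotProduct_sub_dotProduct_eq_of_mulVec_eq {ι K : Type*} [Fintype ι] [CommRing K]
    (A : Matrix ι ι K) {b u : ι → K} (hu : A *ᵥ u = b) (l urp urd : ι → K) :
    l ⬝ᵥ u - l ⬝ᵥ urp = -((-l - Aᵀ *ᵥ urd) ⬝ᵥ (u - urp)) - urd ⬝ᵥ (b - A *ᵥ urp) := by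
  rw [← hu, ← mulVec_sub, sub_dotProduct, mulVec_transpose, ← dotProduct_mulVec, neg_dotProduct,
    dotProduct_sub]
  ring

theorem normR_nonneg (x : Fin n → ℝ) : 0 ≤ normR R x :=
  Real.sqrt_nonneg _

theorem normDual_nonneg (y : Fin n → ℝ) : 0 ≤ normDual R y :=
  Real.sqrt_nonneg _

theorem normDual_neg (y : Fin n → ℝ) : normDual R (-y) = normDual R y := by
  simp [normDual, mulVec_neg]

section PosSemidef

variable (hR : R.PosSemidef)
include hR

theorem normR_mul_self (x : Fin n → ℝ) : normR R x * normR R x = ipR R x x := by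
  refine Real.mul_self_sqrt ?_
  simpa [ipR, dotProduct_comm] using hR.dotProduct_mulVec_nonneg x

/- `R` induces Mathlib's inner product `Matrix.toInnerProductSpace`, whose `inner x y` and `‖x‖`
unfold to `ipR R y x` and `normR R x`. -/

theorem abs_ipR_le_normR_mul_normR (x y : Fin n → ℝ) :
    |ipR R x y| ≤ normR R x * normR R y := by
  let _ := R.toSeminormedAddCommGroup hR
  let _ := R.toInnerProductSpace hR
  have h := abs_real_inner_le_norm y x
  rwa [norm_eq_sqrt_real_inner, norm_eq_sqrt_real_inner, mul_comm] at h

theorem normR_add_le (x y : Fin n → ℝ) : normR R (x + y) ≤ normR R x + normR R y := by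
  let E := R.toSeminormedAddCommGroup hR
  let _ := R.toInnerProductSpace hR
  have h := @norm_add_le _ E.toSeminormedAddGroup x y
  rwa [norm_eq_sqrt_real_inner, norm_eq_sqrt_real_inner, norm_eq_sqrt_real_inner] at h

end PosSemidef

section Invertible

variable (hR : IsUnit R.det)
include hR

theorem normDual_eq_normR_inv_mulVec (y : Fin n → ℝ) : normDual R y = normR R (R⁻¹ *ᵥ y) := by
  rw [normDual, normR, ipR, mulVec_mulVec, mul_nonsing_inv R hR, one_mulVec, dotProduct_comm]

theorem normDual_mulVec (z : Fin n → ℝ) : normDual R (R *ᵥ z) = normR R z := by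
  rw [normDual, normR, ipR, mulVec_mulVec, nonsing_inv_mul R hR, one_mulVec]

theorem dotProduct_eq_ipR_inv_mulVec (y w : Fin n → ℝ) : y ⬝ᵥ w = ipR R (R⁻¹ *ᵥ y) w := by
  rw [ipR, mulVec_mulVec, mul_nonsing_inv R hR, one_mulVec]

end Invertible

section PosDef

variable (hR : R.PosDef)
include hR

theorem ipR_inv_mulVec (x y : Fin n → ℝ) : ipR R x (R⁻¹ *ᵥ y) = x ⬝ᵥ y := by
  have hRt : Rᵀ = R := by rw [← conjTranspose_eq_transpose_of_trivial, hR.isHermitian.eq]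
  rw [ipR, ← vecMul_transpose, hRt, ← dotProduct_mulVec, mulVec_mulVec,
    mul_nonsing_inv R hR.det_pos.ne'.isUnit, one_mulVec]

theorem abs_dotProduct_le_normDual_mul_normR (y w : Fin n → ℝ) :
    |y ⬝ᵥ w| ≤ normDual R y * normR R w := by
  rw [dotProduct_eq_ipR_inv_mulVec hR.det_pos.ne'.isUnit,
    normDual_eq_normR_inv_mulVec hR.det_pos.ne'.isUnit]
  exact abs_ipR_le_normR_mul_normR hR.posSemidef _ _

theorem normDual_add_le (x y : Fin n → ℝ) : normDual R (x + y) ≤ normDual R x + normDual R y := by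
  simp only [normDual_eq_normR_inv_mulVec hR.det_pos.ne'.isUnit, mulVec_add]
  exact normR_add_le hR.posSemidef _ _

/- With `s = A⁻¹ R z` one has `‖z‖_U² = (Aᵀ z) ⬝ᵥ s ≤ ‖Aᵀ z‖_{U'} ‖s‖_U` and
`η ‖s‖_U ≤ ‖A s‖_{U'} = ‖z‖_U`. -/
theorem mul_normR_le_normDual_transpose_mulVec {A : Matrix (Fin n) (Fin n) ℝ} (hA : IsUnit A.det)
    {η : ℝ} (hη : 0 ≤ η) (hmin : ∀ x, η * normR R x ≤ normDual R (A *ᵥ x)) (z : Fin n → ℝ) :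
    η * normR R z ≤ normDual R (Aᵀ *ᵥ z) := by
  set s := A⁻¹ *ᵥ (R *ᵥ z)
  have hAs : A *ᵥ s = R *ᵥ z := by rw [mulVec_mulVec, mul_nonsing_inv A hA, one_mulVec]
  have hs : η * normR R s ≤ normR R z := by
    simpa only [hAs, normDual_mulVec hR.det_pos.ne'.isUnit] using hmin s
  have hz : normR R z * normR R z ≤ normDual R (Aᵀ *ᵥ z) * normR R s :=
    calc normR R z * normR R z = (Aᵀ *ᵥ z) ⬝ᵥ s := by
          rw [normR_mul_self hR.posSemidef, mulVec_transpose, ← dotProduct_mulVec, hAs, ipR,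
            dotProduct_comm]
      _ ≤ |(Aᵀ *ᵥ z) ⬝ᵥ s| := le_abs_self _
      _ ≤ normDual R (Aᵀ *ᵥ z) * normR R s := abs_dotProduct_le_normDual_mul_normR hR _ _
  rcases (normR_nonneg (R := R) z).eq_or_lt with h0 | h0
  · rw [← h0, mul_zero]
    exact normDual_nonneg _
  · refine le_of_mul_le_mul_right ?_ h0
    calc η * normR R z * normR R z ≤ η * (normDual R (Aᵀ *ᵥ z) * normR R s) := by
          rw [mul_assoc]; exact mul_le_mul_of_nonneg_left hz hη
      _ = normDual R (Aᵀ *ᵥ z) * (η * normR R s) := by ring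
      _ ≤ normDual R (Aᵀ *ᵥ z) * normR R z := mul_le_mul_of_nonneg_left hs (normDual_nonneg _)

end PosDef

end

theorem sketched_primal_dual_correction_general {n k : ℕ} (R A : Matrix (Fin n) (Fin n) ℝ)
    (hR : R.PosDef) (hA : IsUnit A.det) (Θ : Matrix (Fin k) (Fin n) ℝ)
    (b l u urp urd : Fin n → ℝ)
    (hu : A.mulVec u = b)
    (ε η : ℝ) (hε0 : 0 ≤ ε) (hη : 0 < η)
    (hηmin : ∀ x : Fin n → ℝ, η * normR R x ≤ normDual R (A.mulVec x))
    (hemb : ∀ x ∈ Submodule.span ℝ {urd, R⁻¹.mulVec (b - A.mulVec urp)},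
      ∀ y ∈ Submodule.span ℝ {urd, R⁻¹.mulVec (b - A.mulVec urp)},
      |ipR R x y - (Θ.mulVec x) ⬝ᵥ (Θ.mulVec y)| ≤ ε * normR R x * normR R y) :
    |l ⬝ᵥ u -
        (l ⬝ᵥ urp - (Θ.mulVec urd) ⬝ᵥ (Θ.mulVec (R⁻¹.mulVec (b - A.mulVec urp))))| ≤
      (normDual R (b - A.mulVec urp) / η) *
        ((1 + ε) * normDual R (-l - Aᵀ.mulVec urd) + ε * normDual R l) := by
  set r := b - A *ᵥ urp
  set rdu := -l - Aᵀ *ᵥ urd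
  set S := (Θ *ᵥ urd) ⬝ᵥ (Θ *ᵥ (R⁻¹ *ᵥ r))
  have herr : l ⬝ᵥ u - (l ⬝ᵥ urp - S) = -(rdu ⬝ᵥ (u - urp)) - (urd ⬝ᵥ r - S) := by
    linear_combination dotProduct_sub_dotProduct_eq_of_mulVec_eq A hu l urp urd
  have he : normR R (u - urp) ≤ normDual R r / η := by
    rw [le_div_iff₀' hη]
    simpa only [mulVec_sub, hu] using hηmin (u - urp)
  have hurd : normR R urd ≤ (normDual R rdu + normDual R l) / η := by
    rw [le_div_iff₀' hη]
    calc η * normR R urd ≤ normDual R (Aᵀ *ᵥ urd) :=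
          mul_normR_le_normDual_transpose_mulVec hR hA hη.le hηmin urd
      _ = normDual R (rdu + l) := by rw [← normDual_neg]; congr 1; simp only [rdu]; abel
      _ ≤ normDual R rdu + normDual R l := normDual_add_le hR _ _
  have hsketch : |urd ⬝ᵥ r - S| ≤ ε * normR R urd * normDual R r := by
    rw [← ipR_inv_mulVec hR, normDual_eq_normR_inv_mulVec hR.det_pos.ne'.isUnit]
    exact hemb _ (Submodule.subset_span (by simp)) _ (Submodule.subset_span (by simp))
  rw [herr]
  calc |-(rdu ⬝ᵥ (u - urp)) - (urd ⬝ᵥ r - S)|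
      ≤ |rdu ⬝ᵥ (u - urp)| + |urd ⬝ᵥ r - S| := by
        simpa only [abs_neg] using abs_sub (-(rdu ⬝ᵥ (u - urp))) (urd ⬝ᵥ r - S)
    _ ≤ normDual R rdu * (normDual R r / η)
          + ε * ((normDual R rdu + normDual R l) / η) * normDual R r := by
        gcongr
        · exact (abs_dotProduct_le_normDual_mul_normR hR _ _).trans
            (mul_le_mul_of_nonneg_left he (normDual_nonneg _))
        · exact hsketch.trans (by gcongr; exact normDual_nonneg _)
    _ = normDual R r / η * ((1 + ε) * normDual R rdu + ε * normDual R l) := by ring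

/-- Error bound for the sketched primal-dual correction
`s_r^{spd} = ⟨l,u_r⟩ - ⟨Θ u_r^du, Θ R⁻¹ r(u_r)⟩`. -/
theorem sketched_primal_dual_correction {n k : ℕ} (R A : Matrix (Fin n) (Fin n) ℝ)
    (hR : R.PosDef) (hA : IsUnit A.det) (Θ : Matrix (Fin k) (Fin n) ℝ)
    (b l u udu urp urd : Fin n → ℝ)
    (hu : A.mulVec u = b) (hdu : Aᵀ.mulVec udu = -l)
    (ε η : ℝ) (hε0 : 0 ≤ ε) (hη : 0 < η)
    (hηmin : ∀ x : Fin n → ℝ, η * normR R x ≤ normDual R (A.mulVec x))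
    (hemb : ∀ x ∈ Submodule.span ℝ {urd, R⁻¹.mulVec (b - A.mulVec urp)},
      ∀ y ∈ Submodule.span ℝ {urd, R⁻¹.mulVec (b - A.mulVec urp)},
      |ipR R x y - (Θ.mulVec x) ⬝ᵥ (Θ.mulVec y)| ≤ ε * normR R x * normR R y) :
    |l ⬝ᵥ u -
        (l ⬝ᵥ urp - (Θ.mulVec urd) ⬝ᵥ (Θ.mulVec (R⁻¹.mulVec (b - A.mulVec urp))))| ≤
      (normDual R (b - A.mulVec urp) / η) *
        ((1 + ε) * normDual R (-l - Aᵀ.mulVec urd) + ε * normDual R l) :=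
  sketched_primal_dual_correction_general R A hR hA Θ b l u urp urd hu ε η hε0 hη hηmin hemb
end
end

section
/- Let U_r be the subspace from the sketched method of snapshots and U_r* the exact POD subspace minimizing (1/m)Σ‖u(μ^i) − P_{W}u(μ^i)‖_U² over r-dimensional W ⊆ range(U_m). If Θ is a U → ℓ2 ε-subspace embedding for the whole snapshot space range(U_m) (0 ≤ ε < 1), then (1/m) Σ_{i=1}^m ‖u(μ^i) − P_{U_r} u(μ^i)‖_U² ≤ (1/(1−ε)) Δ^POD(U_r) ≤ ((1+ε)/(1−ε)) (1/m) Σ_{i=1}^m ‖u(μ^i) − P_{U_r*} u(μ^i)‖_U². -/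
/-!
Part one: the `U`-orthogonal projection onto `U_r` is the best `U`-approximation in `U_r`, so
its error is at most that of the `Θ`-orthogonal projection, and the lower embedding bound turns
this into the sketched error.

Part two: the sketched method of snapshots is POD for the sketched inner product. With
`(Θ U_m)ᵀ (Θ U_m) = ∑ λ_j t_j t_jᵀ`, the `Θ`-projection onto `U_r` does at least as well as the
truncated SVD of `Θ U_m`, whose squared residual is `∑_{j > r} λ_j`. By Eckart–Young this is
at most the sketched residual for any subspace of dimension `r`, in particular for `U_r*`, and the
upper embedding bound brings that back to the `U`-norm.
-/

open Matrix BigOperators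

noncomputable section

theorem dotProduct_self_nonneg {ι : Type*} [Fintype ι] (v : ι → ℝ) : 0 ≤ v ⬝ᵥ v :=
  Finset.sum_nonneg fun i _ => mul_self_nonneg (v i)

section OrthonormalFamily

variable {k : ℕ} {ι : Type*} [Fintype ι] [DecidableEq ι] {q : ι → Fin k → ℝ}

theorem sum_smul_dotProduct_sum_smul (hq : ∀ a b, q a ⬝ᵥ q b = if a = b then 1 else 0)
    (c : ι → ℝ) : (∑ a, c a • q a) ⬝ᵥ (∑ a, c a • q a) = ∑ a, c a ^ 2 := by
  simp [sum_dotProduct, dotProduct_sum, hq, sq]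

theorem dotProduct_self_sub_sum_smul (hq : ∀ a b, q a ⬝ᵥ q b = if a = b then 1 else 0)
    (x : Fin k → ℝ) (c : ι → ℝ) :
    (x - ∑ a, c a • q a) ⬝ᵥ (x - ∑ a, c a • q a) =
      x ⬝ᵥ x - ∑ a, (q a ⬝ᵥ x) ^ 2 + ∑ a, (c a - q a ⬝ᵥ x) ^ 2 := by
  have hcross : x ⬝ᵥ ∑ a, c a • q a = ∑ a, c a * (q a ⬝ᵥ x) := by
    rw [dotProduct_sum]
    exact Finset.sum_congr rfl fun a _ => by rw [dotProduct_smul, dotProduct_comm]; rfl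
  rw [sub_dotProduct, dotProduct_sub, dotProduct_sub, dotProduct_comm (∑ a, c a • q a) x, hcross,
    sum_smul_dotProduct_sum_smul hq]
  simp only [sub_sq, Finset.sum_add_distrib, Finset.sum_sub_distrib, ← Finset.mul_sum,
    mul_assoc]
  ring

theorem sum_sq_dotProduct_le (hq : ∀ a b, q a ⬝ᵥ q b = if a = b then 1 else 0)
    (x : Fin k → ℝ) : ∑ a, (q a ⬝ᵥ x) ^ 2 ≤ x ⬝ᵥ x := by
  have h := dotProduct_self_sub_sum_smul hq x (fun a => q a ⬝ᵥ x)
  simp only [sub_self, ne_eq, OfNat.ofNat_ne_zero, not_false_eq_true, zero_pow,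
    Finset.sum_const_zero, add_zero] at h
  linarith [dotProduct_self_nonneg (x - ∑ a, (q a ⬝ᵥ x) • q a)]

theorem dotProduct_self_sub_sum_sq_le (hq : ∀ a b, q a ⬝ᵥ q b = if a = b then 1 else 0)
    (x : Fin k → ℝ) (c : ι → ℝ) :
    x ⬝ᵥ x - ∑ a, (q a ⬝ᵥ x) ^ 2 ≤ (x - ∑ a, c a • q a) ⬝ᵥ (x - ∑ a, c a • q a) := by
  rw [dotProduct_self_sub_sum_smul hq]
  linarith [Finset.sum_nonneg fun a (_ : a ∈ Finset.univ) => sq_nonneg (c a - q a ⬝ᵥ x)]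

end OrthonormalFamily

theorem Submodule.exists_orthonormal_spanning {k : ℕ} (S : Submodule ℝ (Fin k → ℝ)) :
    ∃ q : Fin (Module.finrank ℝ S) → Fin k → ℝ,
      (∀ a b, q a ⬝ᵥ q b = if a = b then 1 else 0) ∧
      ∀ x ∈ S, ∃ c : Fin (Module.finrank ℝ S) → ℝ, x = ∑ a, c a • q a := by
  let e := WithLp.linearEquiv 2 ℝ (Fin k → ℝ)
  let S' := S.map e.symm.toLinearMap
  let B := (stdOrthonormalBasis ℝ S').reindex (finCongr (LinearEquiv.finrank_map_eq e.symm S))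
  refine ⟨fun a => e (B a), fun a b => ?_, fun x hx => ?_⟩
  · rw [← orthonormal_iff_ite.1 B.orthonormal a b, Submodule.coe_inner, dotProduct_comm]
    rfl
  · refine ⟨fun a => B.repr ⟨e.symm x, S.mem_map_of_mem hx⟩ a, ?_⟩
    have h := congrArg (fun y : S' => e y) (B.sum_repr ⟨e.symm x, S.mem_map_of_mem hx⟩)
    simpa [map_sum] using h.symm

theorem sum_mul_le_sum_of_sum_le_card {ι : Type*} [Fintype ι] [DecidableEq ι]
    (lam β : ι → ℝ) (J : Finset ι)
    (hJ : ∀ i ∈ J, ∀ j ∉ J, lam j ≤ lam i) (hlam : ∀ j, 0 ≤ lam j)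
    (hβ0 : ∀ j, 0 ≤ β j) (hβ1 : ∀ j, β j ≤ 1) (hβ : ∑ j, β j ≤ J.card) :
    ∑ j, lam j * β j ≤ ∑ j ∈ J, lam j := by
  obtain ⟨μ, hμ0, hμJ, hμJc⟩ : ∃ μ, 0 ≤ μ ∧ (∀ i ∈ J, μ ≤ lam i) ∧ ∀ j ∉ J, lam j ≤ μ := by
    rcases J.eq_empty_or_nonempty with rfl | hne
    · exact ⟨∑ j, lam j, Finset.sum_nonneg fun j _ => hlam j, by simp,
        fun j _ => Finset.single_le_sum (fun j _ => hlam j) (Finset.mem_univ j)⟩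
    · exact ⟨J.inf' hne lam, (Finset.le_inf'_iff hne lam).2 fun i _ => hlam i,
        fun i hi => Finset.inf'_le lam hi,
        fun j hj => (Finset.le_inf'_iff hne lam).2 fun i hi => hJ i hi j hj⟩
  -- `(lam j - μ) * (β j - [j ∈ J]) ≤ 0` for every `j`
  have hpoint : ∀ j, lam j * β j ≤ lam j * (if j ∈ J then 1 else 0) +
      μ * (β j - if j ∈ J then 1 else 0) := by
    intro j
    by_cases hj : j ∈ J
    · simp only [hj, if_true]
      nlinarith [hμJ j hj, hβ1 j]
    · simp only [hj, if_false]
      nlinarith [hμJc j hj, hβ0 j]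
  calc ∑ j, lam j * β j
      ≤ ∑ j, (lam j * (if j ∈ J then 1 else 0) + μ * (β j - if j ∈ J then 1 else 0)) :=
        Finset.sum_le_sum fun j _ => hpoint j
    _ = ∑ j ∈ J, lam j + μ * (∑ j, β j - J.card) := by
        rw [Finset.sum_add_distrib, ← Finset.mul_sum, Finset.sum_sub_distrib]
        simp
    _ ≤ ∑ j ∈ J, lam j := by nlinarith

section SpectralDecomposition

variable {k m l : ℕ} {A : Matrix (Fin k) (Fin m) ℝ} {lam : Fin l → ℝ} {t : Fin l → Fin m → ℝ}

theorem mulVec_dotProduct_mulVec_eq_sum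
    (hspec : Aᵀ * A = ∑ j, lam j • vecMulVec (t j) (t j)) (x y : Fin m → ℝ) :
    (A *ᵥ x) ⬝ᵥ (A *ᵥ y) = ∑ j, lam j * (t j ⬝ᵥ x) * (t j ⬝ᵥ y) := by
  rw [dotProduct_mulVec, ← mulVec_transpose, mulVec_mulVec, hspec, sum_mulVec, sum_dotProduct]
  refine Finset.sum_congr rfl fun j _ => ?_
  simp only [smul_mulVec, vecMulVec_mulVec, op_smul_eq_smul, smul_dotProduct, smul_eq_mul]
  ring

variable (hspec : Aᵀ * A = ∑ j, lam j • vecMulVec (t j) (t j))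
  (horth : ∀ i j, t i ⬝ᵥ t j = if i = j then 1 else 0)
include hspec horth

theorem mulVec_eq_sum_smul (x : Fin m → ℝ) : A *ᵥ x = ∑ j, (t j ⬝ᵥ x) • (A *ᵥ t j) := by
  set w := x - ∑ j, (t j ⬝ᵥ x) • t j with hw
  have htw : ∀ j, t j ⬝ᵥ w = 0 := fun j => by simp [w, dotProduct_sub, dotProduct_sum, horth]
  have hAw : A *ᵥ w = 0 :=
    dotProduct_self_eq_zero.1 (by simp [mulVec_dotProduct_mulVec_eq_sum hspec, htw])
  rw [hw, mulVec_sub, mulVec_sum, sub_eq_zero] at hAw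
  simpa [mulVec_smul] using hAw

theorem mulVec_dotProduct_mulVec_of_orthonormal (i j : Fin l) :
    (A *ᵥ t i) ⬝ᵥ (A *ᵥ t j) = if i = j then lam i else 0 := by
  rw [mulVec_dotProduct_mulVec_eq_sum hspec]
  by_cases h : i = j <;> simp [horth, h, Ne.symm]

theorem sum_sq_colV_dotProduct (v : Fin k → ℝ) :
    ∑ i, (colV A i ⬝ᵥ v) ^ 2 = ∑ j, ((A *ᵥ t j) ⬝ᵥ v) ^ 2 := by
  have hcol : ∀ i, colV A i ⬝ᵥ v = (∑ j, ((A *ᵥ t j) ⬝ᵥ v) • t j) i := fun i => by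
    rw [show colV A i = A *ᵥ Pi.single i 1 from (mulVec_single_one A i).symm,
      mulVec_eq_sum_smul hspec horth]
    simp [sum_dotProduct, Finset.sum_apply, mul_comm]
  simp_rw [hcol, ← sum_smul_dotProduct_sum_smul horth]
  simp [dotProduct, sq]

theorem sum_dotProduct_self_colV_sub_sum (J : Finset (Fin l)) :
    ∑ i, (colV A i - ∑ j ∈ J, t j i • (A *ᵥ t j)) ⬝ᵥ (colV A i - ∑ j ∈ J, t j i • (A *ᵥ t j)) =
      ∑ j ∈ Jᶜ, lam j := by
  have hres : ∀ i, colV A i - ∑ j ∈ J, t j i • (A *ᵥ t j) =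
      A *ᵥ (Pi.single i 1 - ∑ j ∈ J, t j i • t j) := fun i => by
    rw [mulVec_sub, mulVec_single_one, mulVec_sum]
    simp only [mulVec_smul]
    rfl
  have hdot : ∀ i j', t j' ⬝ᵥ (Pi.single i 1 - ∑ j ∈ J, t j i • t j) =
      if j' ∈ J then 0 else t j' i := fun i j' => by
    simp only [dotProduct_sub, dotProduct_single, mul_one, dotProduct_sum, dotProduct_smul, horth,
      smul_eq_mul, mul_ite, mul_zero, Finset.sum_ite_eq]
    split_ifs <;> simp
  have hcoef : ∀ j', ∑ i, lam j' * (if j' ∈ J then 0 else t j' i) *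
      (if j' ∈ J then 0 else t j' i) = if j' ∈ J then 0 else lam j' := fun j' => by
    split_ifs
    · simp
    · simpa [dotProduct, mul_assoc, ← Finset.mul_sum] using congrArg (lam j' * ·) (horth j' j')
  simp_rw [hres, mulVec_dotProduct_mulVec_eq_sum hspec, hdot]
  rw [Finset.sum_comm, Finset.sum_congr rfl fun j' _ => hcoef j']
  simp [Finset.sum_ite, Finset.filter_not, Finset.compl_eq_univ_sdiff]

theorem sum_dotProduct_self_colV : ∑ i, colV A i ⬝ᵥ colV A i = ∑ j, lam j := by
  simpa using sum_dotProduct_self_colV_sub_sum hspec horth ∅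

theorem sum_sum_sq_dotProduct_colV_le (hpos : ∀ j, 0 < lam j) (J : Finset (Fin l))
    (hJ : ∀ i ∈ J, ∀ j ∉ J, lam j ≤ lam i) {ι : Type*} [Fintype ι] [DecidableEq ι]
    {q : ι → Fin k → ℝ} (hq : ∀ a b, q a ⬝ᵥ q b = if a = b then 1 else 0)
    (hcard : Fintype.card ι ≤ J.card) :
    ∑ i, ∑ a, (q a ⬝ᵥ colV A i) ^ 2 ≤ ∑ j ∈ J, lam j := by
  -- the left singular vectors of `A`
  set s : Fin l → Fin k → ℝ := fun j => (√(lam j))⁻¹ • (A *ᵥ t j)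
  have hs : ∀ i j, s i ⬝ᵥ s j = if i = j then 1 else 0 := fun i j => by
    simp only [s, smul_dotProduct, dotProduct_smul, smul_eq_mul,
      mulVec_dotProduct_mulVec_of_orthonormal hspec horth]
    split_ifs with h
    · subst h
      field_simp
      rw [Real.sq_sqrt (hpos i).le, div_self (hpos i).ne']
    · simp
  have hAt : ∀ j v, ((A *ᵥ t j) ⬝ᵥ v) ^ 2 = lam j * (v ⬝ᵥ s j) ^ 2 := fun j v => by
    rw [dotProduct_comm v, smul_dotProduct, smul_eq_mul, mul_pow, inv_pow,
      Real.sq_sqrt (hpos j).le, mul_inv_cancel_left₀ (hpos j).ne']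
  have hweights : ∑ j, ∑ a, (q a ⬝ᵥ s j) ^ 2 ≤ J.card :=
    calc ∑ j, ∑ a, (q a ⬝ᵥ s j) ^ 2 = ∑ a, ∑ j, (s j ⬝ᵥ q a) ^ 2 := by
          rw [Finset.sum_comm]
          simp_rw [dotProduct_comm (q _)]
      _ ≤ ∑ _a : ι, (1 : ℝ) :=
          Finset.sum_le_sum fun a _ => by simpa [hq] using sum_sq_dotProduct_le hs (q a)
      _ ≤ J.card := by simpa using hcard
  calc ∑ i, ∑ a, (q a ⬝ᵥ colV A i) ^ 2 = ∑ a, ∑ j, lam j * (q a ⬝ᵥ s j) ^ 2 := by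
        rw [Finset.sum_comm]
        simp_rw [dotProduct_comm (q _) (colV A _), sum_sq_colV_dotProduct hspec horth, hAt]
    _ = ∑ j, lam j * ∑ a, (q a ⬝ᵥ s j) ^ 2 := by
        rw [Finset.sum_comm]
        simp_rw [Finset.mul_sum]
    _ ≤ ∑ j ∈ J, lam j :=
        sum_mul_le_sum_of_sum_le_card lam _ J hJ (fun j => (hpos j).le)
          (fun j => Finset.sum_nonneg fun a _ => sq_nonneg _)
          (fun j => by simpa [hs] using sum_sq_dotProduct_le hq (s j)) hweights

theorem eckart_young (hpos : ∀ j, 0 < lam j) (J : Finset (Fin l))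
    (hJ : ∀ i ∈ J, ∀ j ∉ J, lam j ≤ lam i) (S : Submodule ℝ (Fin k → ℝ))
    (hS : Module.finrank ℝ S ≤ J.card) (b : Fin m → Fin k → ℝ) (hb : ∀ i, b i ∈ S) :
    ∑ j ∈ Jᶜ, lam j ≤ ∑ i, (colV A i - b i) ⬝ᵥ (colV A i - b i) := by
  obtain ⟨q, hq, hspan⟩ := S.exists_orthonormal_spanning
  choose c hc using fun i => hspan (b i) (hb i)
  have hcaptured := sum_sum_sq_dotProduct_colV_le hspec horth hpos J hJ hq (by simpa using hS)
  calc ∑ j ∈ Jᶜ, lam j = ∑ j, lam j - ∑ j ∈ J, lam j := by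
        rw [← Finset.sum_compl_add_sum J]
        ring
    _ ≤ ∑ i, (colV A i ⬝ᵥ colV A i - ∑ a, (q a ⬝ᵥ colV A i) ^ 2) := by
        rw [Finset.sum_sub_distrib, sum_dotProduct_self_colV hspec horth]
        linarith
    _ ≤ _ := Finset.sum_le_sum fun i _ => hc i ▸ dotProduct_self_sub_sum_sq_le hq _ (c i)

end SpectralDecomposition

section InnerProductOfMatrix

variable {n : ℕ} {R : Matrix (Fin n) (Fin n) ℝ}

theorem ipR_comm (hR : R.IsHermitian) (x y : Fin n → ℝ) : ipR R x y = ipR R y x := by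
  rw [ipR, ipR, dotProduct_comm, dotProduct_mulVec, ← mulVec_transpose,
    ← conjTranspose_eq_transpose_of_trivial, hR.eq]

theorem ipR_self_nonneg (hR : R.PosSemidef) (x : Fin n → ℝ) : 0 ≤ ipR R x x := by
  simpa [ipR, dotProduct_comm] using hR.dotProduct_mulVec_nonneg x

theorem ipR_add_self (hR : R.IsHermitian) (x v : Fin n → ℝ) :
    ipR R (x + v) (x + v) = ipR R x x + 2 * ipR R x v + ipR R v v := by
  have h := ipR_comm hR v x
  simp only [ipR, mulVec_add, add_dotProduct, dotProduct_add] at h ⊢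
  linarith

theorem ipR_sub_self_le_of_orthogonal (hR : R.PosSemidef) {W : Submodule ℝ (Fin n → ℝ)}
    {x p w : Fin n → ℝ} (hp : p ∈ W) (hxp : ∀ v ∈ W, ipR R (x - p) v = 0) (hw : w ∈ W) :
    ipR R (x - p) (x - p) ≤ ipR R (x - w) (x - w) := by
  rw [show x - w = (x - p) + (p - w) by abel, ipR_add_self hR.1, hxp _ (W.sub_mem hp hw)]
  linarith [ipR_self_nonneg hR (p - w)]

theorem normR_sq (hR : R.PosSemidef) (x : Fin n → ℝ) : normR R x ^ 2 = ipR R x x :=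
  Real.sq_sqrt (ipR_self_nonneg hR x)

theorem ipR_transpose_mul_self {k : ℕ} (Θ : Matrix (Fin k) (Fin n) ℝ) (x y : Fin n → ℝ) :
    ipR (Θᵀ * Θ) x y = (Θ *ᵥ x) ⬝ᵥ (Θ *ᵥ y) := by
  rw [ipR, ← mulVec_mulVec, mulVec_transpose, dotProduct_mulVec]

theorem posSemidef_transpose_mul_self {k : ℕ} (Θ : Matrix (Fin k) (Fin n) ℝ) :
    (Θᵀ * Θ).PosSemidef := by
  simpa using posSemidef_conjTranspose_mul_self Θ

end InnerProductOfMatrix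

theorem norm2_sq {k : ℕ} (v : Fin k → ℝ) : norm2 v ^ 2 = v ⬝ᵥ v :=
  Real.sq_sqrt (dotProduct_self_nonneg v)

theorem norm2_sq_mem_Icc {n k : ℕ} {R : Matrix (Fin n) (Fin n) ℝ} (hR : R.PosSemidef)
    {Θ : Matrix (Fin k) (Fin n) ℝ} {ε : ℝ} {z : Fin n → ℝ}
    (h : |ipR R z z - (Θ *ᵥ z) ⬝ᵥ (Θ *ᵥ z)| ≤ ε * normR R z * normR R z) :
    norm2 (Θ *ᵥ z) ^ 2 ∈ Set.Icc ((1 - ε) * normR R z ^ 2) ((1 + ε) * normR R z ^ 2) := by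
  rw [mul_assoc, ← sq, normR_sq hR] at h
  rw [normR_sq hR, norm2_sq, Set.mem_Icc]
  constructor <;> linarith [abs_le.1 h]

theorem one_sub_mul_normR_sq_le_norm2_sq {n k : ℕ} {R : Matrix (Fin n) (Fin n) ℝ}
    (hR : R.PosSemidef) {Θ : Matrix (Fin k) (Fin n) ℝ} {ε : ℝ} (hε : ε ≤ 1)
    {W : Submodule ℝ (Fin n → ℝ)} {x p w : Fin n → ℝ} (hp : p ∈ W)
    (hxp : ∀ v ∈ W, ipR R (x - p) v = 0) (hw : w ∈ W)
    (hemb : |ipR R (x - w) (x - w) - (Θ *ᵥ (x - w)) ⬝ᵥ (Θ *ᵥ (x - w))| ≤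
      ε * normR R (x - w) * normR R (x - w)) :
    (1 - ε) * normR R (x - p) ^ 2 ≤ norm2 (Θ *ᵥ (x - w)) ^ 2 :=
  calc (1 - ε) * normR R (x - p) ^ 2 ≤ (1 - ε) * normR R (x - w) ^ 2 := by
        rw [normR_sq hR, normR_sq hR]
        gcongr
        exact ipR_sub_self_le_of_orthogonal hR hp hxp hw
    _ ≤ _ := (norm2_sq_mem_Icc hR hemb).1

theorem sum_sketched_residual_le {n k m l : ℕ} {Θ : Matrix (Fin k) (Fin n) ℝ}
    {Um : Matrix (Fin n) (Fin m) ℝ} {lam : Fin l → ℝ} {t : Fin l → Fin m → ℝ}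
    (hspec : (Θ * Um)ᵀ * (Θ * Um) = ∑ j, lam j • vecMulVec (t j) (t j))
    (horth : ∀ i j, t i ⬝ᵥ t j = if i = j then 1 else 0) (hpos : ∀ j, 0 < lam j)
    (J : Finset (Fin l)) (hJ : ∀ i ∈ J, ∀ j ∉ J, lam j ≤ lam i)
    {W : Submodule ℝ (Fin n → ℝ)} (hW : ∀ j ∈ J, Um *ᵥ t j ∈ W) {pθ : Fin m → Fin n → ℝ}
    (hpθ : ∀ i, pθ i ∈ W ∧ ∀ w ∈ W, (Θ *ᵥ (colV Um i - pθ i)) ⬝ᵥ (Θ *ᵥ w) = 0)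
    {V : Submodule ℝ (Fin n → ℝ)} (hV : Module.finrank ℝ V ≤ J.card)
    {v : Fin m → Fin n → ℝ} (hv : ∀ i, v i ∈ V) :
    ∑ i, (Θ *ᵥ (colV Um i - pθ i)) ⬝ᵥ (Θ *ᵥ (colV Um i - pθ i)) ≤
      ∑ i, (Θ *ᵥ (colV Um i - v i)) ⬝ᵥ (Θ *ᵥ (colV Um i - v i)) := by
  have hcol : ∀ i x, Θ *ᵥ (colV Um i - x) = colV (Θ * Um) i - Θ *ᵥ x := fun i x => by
    rw [mulVec_sub, show colV Um i = Um *ᵥ Pi.single i 1 from (mulVec_single_one Um i).symm,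
      mulVec_mulVec, mulVec_single_one]
    rfl
  -- `Θ *ᵥ c i` is the rank-`J` truncated SVD of the `i`-th column of `Θ * Um`
  let c i := ∑ j ∈ J, t j i • (Um *ᵥ t j)
  have hΘc : ∀ i, Θ *ᵥ c i = ∑ j ∈ J, t j i • ((Θ * Um) *ᵥ t j) := fun i => by
    simp [c, mulVec_sum, mulVec_smul, mulVec_mulVec]
  calc ∑ i, (Θ *ᵥ (colV Um i - pθ i)) ⬝ᵥ (Θ *ᵥ (colV Um i - pθ i))
      ≤ ∑ i, (Θ *ᵥ (colV Um i - c i)) ⬝ᵥ (Θ *ᵥ (colV Um i - c i)) :=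
        Finset.sum_le_sum fun i _ => by
          simpa only [ipR_transpose_mul_self] using
            ipR_sub_self_le_of_orthogonal (posSemidef_transpose_mul_self Θ) (hpθ i).1
              (by simpa only [ipR_transpose_mul_self] using (hpθ i).2)
              (W.sum_mem fun j hj => W.smul_mem _ (hW j hj))
    _ = ∑ j ∈ Jᶜ, lam j := by
        simp_rw [hcol, hΘc]
        exact sum_dotProduct_self_colV_sub_sum hspec horth J
    _ ≤ ∑ i, (colV (Θ * Um) i - Θ *ᵥ v i) ⬝ᵥ (colV (Θ * Um) i - Θ *ᵥ v i) :=
        eckart_young hspec horth hpos J hJ (V.map Θ.mulVecLin)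
          ((Submodule.finrank_map_le _ _).trans hV) _ fun i => ⟨v i, hv i, rfl⟩
    _ = _ := by simp_rw [hcol]

theorem sum_sketched_residual_le_of_span {n k m l r : ℕ} {Θ : Matrix (Fin k) (Fin n) ℝ}
    {Um : Matrix (Fin n) (Fin m) ℝ} {lam : Fin l → ℝ} {t : Fin l → Fin m → ℝ} (hrl : r ≤ l)
    (hspec : (Θ * Um)ᵀ * (Θ * Um) = ∑ j, lam j • vecMulVec (t j) (t j))
    (horth : ∀ i j, t i ⬝ᵥ t j = if i = j then 1 else 0) (hpos : ∀ j, 0 < lam j)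
    (hord : Antitone lam) {W : Submodule ℝ (Fin n → ℝ)}
    (hW : W = Submodule.span ℝ (Set.range fun i : Fin r => Um *ᵥ t (Fin.castLE hrl i)))
    {pθ : Fin m → Fin n → ℝ}
    (hpθ : ∀ i, pθ i ∈ W ∧ ∀ w ∈ W, (Θ *ᵥ (colV Um i - pθ i)) ⬝ᵥ (Θ *ᵥ w) = 0)
    {V : Submodule ℝ (Fin n → ℝ)} (hV : Module.finrank ℝ V ≤ r)
    {v : Fin m → Fin n → ℝ} (hv : ∀ i, v i ∈ V) :
    ∑ i, (Θ *ᵥ (colV Um i - pθ i)) ⬝ᵥ (Θ *ᵥ (colV Um i - pθ i)) ≤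
      ∑ i, (Θ *ᵥ (colV Um i - v i)) ⬝ᵥ (Θ *ᵥ (colV Um i - v i)) := by
  let J := Finset.univ.filter fun j : Fin l => (j : ℕ) < r
  have hJ : ∀ i ∈ J, ∀ j ∉ J, lam j ≤ lam i := fun i hi j hj =>
    hord (Fin.le_def.2 (by simp [J] at hi hj; omega))
  have hJcard : J.card = r := by simp [J, Fin.card_filter_val_lt, hrl]
  exact sum_sketched_residual_le hspec horth hpos J hJ
    (fun j hj => hW ▸ Submodule.subset_span ⟨⟨j, by simpa [J] using hj⟩, rfl⟩) hpθ
    (hJcard ▸ hV) hv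

theorem mul_le_one_div_one_sub_mul_and {a b c ε w : ℝ} (hε : ε < 1) (hw : 0 ≤ w)
    (hab : (1 - ε) * a ≤ b) (hbc : b ≤ (1 + ε) * c) :
    w * a ≤ 1 / (1 - ε) * (w * b) ∧ 1 / (1 - ε) * (w * b) ≤ (1 + ε) / (1 - ε) * (w * c) := by
  have hε' : 0 < 1 - ε := by linarith
  constructor
  · calc w * a = 1 / (1 - ε) * (w * ((1 - ε) * a)) := by field_simp
      _ ≤ _ := by gcongr
  · calc _ ≤ 1 / (1 - ε) * (w * ((1 + ε) * c)) := by gcongr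
      _ = _ := by ring

theorem sketched_pod_quasi_optimality_general {n m k r l : ℕ}
    (R : Matrix (Fin n) (Fin n) ℝ) (hR : R.PosDef)
    (Θ : Matrix (Fin k) (Fin n) ℝ) (Um : Matrix (Fin n) (Fin m) ℝ)
    (ε : ℝ) (hε1 : ε < 1)
    (hemb : ∀ x ∈ LinearMap.range Um.mulVecLin, ∀ y ∈ LinearMap.range Um.mulVecLin,
      |ipR R x y - (Θ.mulVec x) ⬝ᵥ (Θ.mulVec y)| ≤ ε * normR R x * normR R y)
    -- the sketched method of snapshots subspace `U_r`
    (lam : Fin l → ℝ) (t : Fin l → (Fin m → ℝ)) (hrl : r ≤ l)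
    (hspec : (Θ * Um)ᵀ * (Θ * Um) = ∑ i, lam i • Matrix.vecMulVec (t i) (t i))
    (horth : ∀ i j : Fin l, t i ⬝ᵥ t j = if i = j then (1 : ℝ) else 0)
    (hpos : ∀ i, 0 < lam i)
    (hord : ∀ i j : Fin l, i ≤ j → lam j ≤ lam i)
    (Ur : Submodule ℝ (Fin n → ℝ))
    (hUr : Ur = Submodule.span ℝ
      (Set.range fun i : Fin r => Um.mulVec (t (Fin.castLE hrl i))))
    -- the exact POD subspace `U_r*`
    (Ustar : Submodule ℝ (Fin n → ℝ)) (hUstarSub : Ustar ≤ LinearMap.range Um.mulVecLin)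
    (hUstarDim : Module.finrank ℝ Ustar = r)
    (ps : Fin m → (Fin n → ℝ))
    (hps : ∀ i, ps i ∈ Ustar ∧ ∀ w ∈ Ustar, ipR R (colV Um i - ps i) w = 0)
    -- `U`-orthogonal and `Θ`-orthogonal projections onto `U_r`
    (p : Fin m → (Fin n → ℝ))
    (hp : ∀ i, p i ∈ Ur ∧ ∀ w ∈ Ur, ipR R (colV Um i - p i) w = 0)
    (pθ : Fin m → (Fin n → ℝ))
    (hpθ : ∀ i, pθ i ∈ Ur ∧
      ∀ w ∈ Ur, (Θ.mulVec (colV Um i - pθ i)) ⬝ᵥ (Θ.mulVec w) = 0) :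
    (1 / (m : ℝ)) * ∑ i, (normR R (colV Um i - p i)) ^ 2 ≤
      (1 / (1 - ε)) *
        ((1 / (m : ℝ)) * ∑ i, (norm2 (Θ.mulVec (colV Um i - pθ i))) ^ 2) ∧
    (1 / (1 - ε)) *
        ((1 / (m : ℝ)) * ∑ i, (norm2 (Θ.mulVec (colV Um i - pθ i))) ^ 2) ≤
      ((1 + ε) / (1 - ε)) *
        ((1 / (m : ℝ)) * ∑ i, (normR R (colV Um i - ps i)) ^ 2) := by
  have hRpsd := hR.posSemidef
  have hsnap : ∀ i, colV Um i ∈ LinearMap.range Um.mulVecLin :=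
    fun i => ⟨Pi.single i 1, mulVec_single_one Um i⟩
  have hUr_le : Ur ≤ LinearMap.range Um.mulVecLin :=
    hUr ▸ Submodule.span_le.2 (Set.range_subset_iff.2 fun _ => ⟨_, rfl⟩)
  have hU : (1 - ε) * ∑ i, normR R (colV Um i - p i) ^ 2 ≤
      ∑ i, norm2 (Θ *ᵥ (colV Um i - pθ i)) ^ 2 := by
    rw [Finset.mul_sum]
    refine Finset.sum_le_sum fun i _ => ?_
    have hz := Submodule.sub_mem _ (hsnap i) (hUr_le (hpθ i).1)
    exact one_sub_mul_normR_sq_le_norm2_sq hRpsd hε1.le (hp i).1 (hp i).2 (hpθ i).1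
      (hemb _ hz _ hz)
  have hΘ : ∑ i, norm2 (Θ *ᵥ (colV Um i - pθ i)) ^ 2 ≤
      (1 + ε) * ∑ i, normR R (colV Um i - ps i) ^ 2 := by
    simp_rw [norm2_sq, Finset.mul_sum]
    refine (sum_sketched_residual_le_of_span hrl hspec horth hpos hord hUr hpθ hUstarDim.le
      fun i => (hps i).1).trans (Finset.sum_le_sum fun i _ => ?_)
    have hz := Submodule.sub_mem _ (hsnap i) (hUstarSub (hps i).1)
    simpa [norm2_sq] using (norm2_sq_mem_Icc hRpsd (hemb _ hz _ hz)).2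
  exact mul_le_one_div_one_sub_mul_and hε1 (by positivity) hU hΘ

/-- Quasi-optimality of the subspace obtained by the sketched method of snapshots when
`Θ` is a `U → ℓ2` ε-subspace embedding for the whole snapshot space. -/
theorem sketched_pod_quasi_optimality {n m k r l : ℕ}
    (R : Matrix (Fin n) (Fin n) ℝ) (hR : R.PosDef)
    (Θ : Matrix (Fin k) (Fin n) ℝ) (Um : Matrix (Fin n) (Fin m) ℝ)
    (ε : ℝ) (hε0 : 0 ≤ ε) (hε1 : ε < 1)
    (hemb : ∀ x ∈ LinearMap.range Um.mulVecLin, ∀ y ∈ LinearMap.range Um.mulVecLin,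
      |ipR R x y - (Θ.mulVec x) ⬝ᵥ (Θ.mulVec y)| ≤ ε * normR R x * normR R y)
    -- the sketched method of snapshots subspace `U_r`
    (lam : Fin l → ℝ) (t : Fin l → (Fin m → ℝ)) (hrl : r ≤ l)
    (hspec : (Θ * Um)ᵀ * (Θ * Um) = ∑ i, lam i • Matrix.vecMulVec (t i) (t i))
    (horth : ∀ i j : Fin l, t i ⬝ᵥ t j = if i = j then (1 : ℝ) else 0)
    (hpos : ∀ i, 0 < lam i)
    (hord : ∀ i j : Fin l, i ≤ j → lam j ≤ lam i)
    (Ur : Submodule ℝ (Fin n → ℝ))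
    (hUr : Ur = Submodule.span ℝ
      (Set.range fun i : Fin r => Um.mulVec (t (Fin.castLE hrl i))))
    -- the exact POD subspace `U_r*`
    (Ustar : Submodule ℝ (Fin n → ℝ)) (hUstarSub : Ustar ≤ LinearMap.range Um.mulVecLin)
    (hUstarDim : Module.finrank ℝ Ustar = r)
    (ps : Fin m → (Fin n → ℝ))
    (hps : ∀ i, ps i ∈ Ustar ∧ ∀ w ∈ Ustar, ipR R (colV Um i - ps i) w = 0)
    (hUstarOpt : ∀ W : Submodule ℝ (Fin n → ℝ), W ≤ LinearMap.range Um.mulVecLin →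
      Module.finrank ℝ W = r →
      ∀ q : Fin m → (Fin n → ℝ),
        (∀ i, q i ∈ W ∧ ∀ w ∈ W, ipR R (colV Um i - q i) w = 0) →
        ∑ i, (normR R (colV Um i - ps i)) ^ 2 ≤ ∑ i, (normR R (colV Um i - q i)) ^ 2)
    -- `U`-orthogonal and `Θ`-orthogonal projections onto `U_r`
    (p : Fin m → (Fin n → ℝ))
    (hp : ∀ i, p i ∈ Ur ∧ ∀ w ∈ Ur, ipR R (colV Um i - p i) w = 0)
    (pθ : Fin m → (Fin n → ℝ))
    (hpθ : ∀ i, pθ i ∈ Ur ∧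
      ∀ w ∈ Ur, (Θ.mulVec (colV Um i - pθ i)) ⬝ᵥ (Θ.mulVec w) = 0) :
    (1 / (m : ℝ)) * ∑ i, (normR R (colV Um i - p i)) ^ 2 ≤
      (1 / (1 - ε)) *
        ((1 / (m : ℝ)) * ∑ i, (norm2 (Θ.mulVec (colV Um i - pθ i))) ^ 2) ∧
    (1 / (1 - ε)) *
        ((1 / (m : ℝ)) * ∑ i, (norm2 (Θ.mulVec (colV Um i - pθ i))) ^ 2) ≤
      ((1 + ε) / (1 - ε)) *
        ((1 / (m : ℝ)) * ∑ i, (normR R (colV Um i - ps i)) ^ 2) :=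
  sketched_pod_quasi_optimality_general R hR Θ Um ε hε1 hemb lam t hrl hspec horth hpos hord Ur hUr
    Ustar hUstarSub hUstarDim ps hps p hp pθ hpθ
end
end
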